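/- Let κ be a regular cardinal and let (C, τ) be a κ-geometric site. Then the Grothendieck topology generated by τ is subcanonical (every representable presheaf Cᵒᵖ ⥤ Type is a sheaf) if and only if for every τ-covering family {fᵢ : Uᵢ ⟶ X} the induced morphism Sigma.desc fᵢ : ∐ᵢ Uᵢ ⟶ X is an effective epimorphism in C. -/

import Mathlib

/-!
A representable presheaf is a sheaf for a presieve exactly when the presieve is effective
epimorphic, which for `Presieve.ofArrows U f` means that `f` is an effective epimorphic family.
Such a family always induces an effective epimorphism out of the coproduct; conversely, because
coproducts in a `κ`-geometric category are stable under pullback, the family inherits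
effectiveness from the morphism out of the coproduct.
-/

open CategoryTheory Limits

universe u

/-- A presheaf `F : Cᵒᵖ ⥤ Type u` preserves `κ`-small products if it sends every coproduct
cocone of a family indexed by a `κ`-small type to a limit cone in `Type u`. -/
def PreservesKappaSmallProducts {C : Type u} [Category.{u} C] (κ : Cardinal.{u})
    (F : Cᵒᵖ ⥤ Type u) : Prop :=
  ∀ {ι : Type u}, Cardinal.mk ι < κ → ∀ (X : ι → C) (c : Cofan X), IsColimit c →
    Nonempty (IsLimit (F.mapCone c.op))

/-- A category `C` with pullbacks is `κ`-geometric if it has coproducts of all `κ`-small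
families of objects, and these coproducts are disjoint and universal. -/
structure KappaGeometric (κ : Cardinal.{u}) (C : Type u) [Category.{u} C]
    [HasPullbacks C] : Prop where
  hasCoproduct : ∀ {ι : Type u}, Cardinal.mk ι < κ → ∀ X : ι → C, HasCoproduct X
  mono_inj : ∀ {ι : Type u}, Cardinal.mk ι < κ → ∀ (X : ι → C) (c : Cofan X),
    IsColimit c → ∀ i, Mono (c.inj i)
  disjoint : ∀ {ι : Type u}, Cardinal.mk ι < κ → ∀ (X : ι → C) (c : Cofan X),
    IsColimit c → ∀ i j, i ≠ j → Nonempty (IsInitial (pullback (c.inj i) (c.inj j)))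
  universal : ∀ {ι : Type u}, Cardinal.mk ι < κ → ∀ (X : ι → C) (c : Cofan X),
    IsColimit c → ∀ {Y : C} (f : Y ⟶ c.pt),
      Nonempty (IsColimit (Cofan.mk Y (fun i => pullback.snd (c.inj i) f)))

/-- A `κ`-geometric site is a `κ`-geometric category together with a Grothendieck
pretopology `τ` such that the presieve of coproduct inclusions of any `κ`-small family is a
`τ`-covering, and every `τ`-covering presieve is given by a family of morphisms indexed by a
`κ`-small type. -/
structure IsKappaGeometricSite (κ : Cardinal.{u}) (C : Type u) [Category.{u} C]
    [HasPullbacks C] (τ : Pretopology C) : Prop where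
  geometric : KappaGeometric κ C
  coproduct_mem : ∀ {ι : Type u}, Cardinal.mk ι < κ → ∀ (X : ι → C) (c : Cofan X),
    IsColimit c → Presieve.ofArrows X c.inj ∈ τ c.pt
  small_coverings : ∀ ⦃X : C⦄ (R : Presieve X), R ∈ τ X →
    ∃ (ι : Type u), Cardinal.mk ι < κ ∧
      ∃ (Z : ι → C) (g : ∀ i, Z i ⟶ X), R = Presieve.ofArrows Z g

theorem CategoryTheory.Pretopology.isSheaf_yoneda_iff_forall_effectiveEpimorphic {C : Type*}
    [Category* C] [HasPullbacks C] (τ : Pretopology C) :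
    (∀ W : C, Presieve.IsSheaf τ.toGrothendieck (yoneda.obj W)) ↔
      ∀ ⦃X : C⦄ (R : Presieve X), R ∈ τ X → R.EffectiveEpimorphic := by
  simp only [Presieve.isSheaf_pretopology,
    Presieve.EffectiveEpimorphic.iff_forall_isSheafFor_yoneda]
  exact ⟨fun h _ R hR W ↦ h W R hR, fun h W _ R hR ↦ h R hR W⟩

section UniversalCoproduct

variable {C : Type*} [Category* C] [HasPullbacks C] {α : Type*} {X : α → C} [HasCoproduct X]
  (huniv : ∀ {Z : C} (g : Z ⟶ ∐ X),
    IsColimit (Cofan.mk Z fun a ↦ pullback.snd (Sigma.ι X a) g))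
include huniv

lemma hasCoproduct_pullback_of_isColimit {Z : C} (g : Z ⟶ ∐ X) :
    HasCoproduct fun a ↦ pullback g (Sigma.ι X a) :=
  have : HasCoproduct fun a ↦ pullback (Sigma.ι X a) g := ⟨⟨⟨_, huniv g⟩⟩⟩
  hasColimit_of_iso (F := Discrete.functor fun a ↦ pullback (Sigma.ι X a) g)
    (Discrete.natIso fun a ↦ pullbackSymmetry g (Sigma.ι X a.as))

lemma epi_sigmaDesc_pullback_fst_of_isColimit {Z : C} (g : Z ⟶ ∐ X)
    [HasCoproduct fun a ↦ pullback g (Sigma.ι X a)] :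
    Epi (Sigma.desc fun a ↦ pullback.fst g (Sigma.ι X a)) where
  left_cancellation h₁ h₂ h := (huniv g).hom_ext fun ⟨a⟩ ↦ by
    simpa using (pullbackSymmetry (Sigma.ι X a) g).hom ≫= Sigma.ι _ a ≫= h

theorem effectiveEpiFamily_of_effectiveEpi_sigmaDesc {B : C} (π : ∀ a, X a ⟶ B)
    [EffectiveEpi (Sigma.desc π)] : EffectiveEpiFamily X π :=
  have := fun {Z : C} (g : Z ⟶ ∐ X) ↦ hasCoproduct_pullback_of_isColimit huniv g
  have := fun {Z : C} (g : Z ⟶ ∐ X) ↦ epi_sigmaDesc_pullback_fst_of_isColimit huniv g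
  ⟨⟨effectiveEpiFamilyStructOfEffectiveEpiDesc X π⟩⟩

end UniversalCoproduct

theorem statement2 (κ : Cardinal.{u}) (C : Type u) [Category.{u} C]
    [HasPullbacks C] (τ : Pretopology C) (hτ : IsKappaGeometricSite κ C τ) :
    (∀ X : C, Presieve.IsSheaf τ.toGrothendieck (yoneda.obj X)) ↔
      ∀ {ι : Type u} {X : C} (U : ι → C) (f : ∀ i, U i ⟶ X),
        Presieve.ofArrows U f ∈ τ X →
          ∀ (c : Cofan U) (hc : IsColimit c), EffectiveEpi (hc.desc (Cofan.mk X f)) := by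
  rw [τ.isSheaf_yoneda_iff_forall_effectiveEpimorphic]
  constructor
  · intro hcov ι X U f hf c hc
    have := (Sieve.effectiveEpimorphic_family U f).mp (hcov _ hf)
    exact ⟨⟨effectiveEpiStructIsColimitDescOfEffectiveEpiFamily U c hc f⟩⟩
  · intro heff X R hR
    obtain ⟨ι, hι, Z, g, rfl⟩ := hτ.small_coverings R hR
    have := hτ.geometric.hasCoproduct hι Z
    have : EffectiveEpi (Sigma.desc g) := by
      simpa [coproductIsCoproduct] using heff Z g hR _ (coproductIsCoproduct Z)
    have huniv {Y : C} (y : Y ⟶ ∐ Z) :=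
      (hτ.geometric.universal hι Z _ (coproductIsCoproduct Z) y).some
    exact (Sieve.effectiveEpimorphic_family Z g).mpr
      (effectiveEpiFamily_of_effectiveEpi_sigmaDesc huniv g)
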